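/- There is a constant C > 0 such that for all λ > 0, all t ∈ (0, T], and all s > 0, the second derivative of s ↦ exp(-λ^s t) satisfies |d²/ds² exp(-λ^s t)| ≤ C s^{-2} (1 + |ln t|²). -/

import Mathlib

/-!
Put `x = λ^s t`. Differentiating twice gives `E'' = (ln λ)² (x² - x) e^{-x}`, and
`s ln λ = ln x - ln t`. Hence `s² |E''| = (ln x - ln t)² x |x - 1| e^{-x}`, which is at most
`2 (1 + ln² t)` times `(1 + ln² x)(x² + x) e^{-x}`, a function bounded on `(0, ∞)`:
the exponential beats every power of `x` at infinity, and `x ln² x → 0` at zero.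
-/

open Real

namespace Real

lemma pow_mul_exp_neg_le_factorial {x : ℝ} (hx : 0 ≤ x) (n : ℕ) :
    x ^ n * exp (-x) ≤ n.factorial := by
  rw [exp_neg, ← div_eq_mul_inv, div_le_iff₀ (exp_pos x), mul_comm]
  exact (div_le_iff₀ (by positivity)).mp (pow_div_factorial_le_exp x hx n)

lemma one_add_log_sq_mul_sq_add_self_mul_exp_neg_le {x : ℝ} (hx : 0 < x) :
    (1 + log x ^ 2) * ((x ^ 2 + x) * exp (-x)) ≤ 33 := by
  rcases le_or_gt 1 x with h1 | h1
  · have hlog : log x ^ 2 ≤ x ^ 2 :=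
      pow_le_pow_left₀ (log_nonneg h1) ((log_le_sub_one_of_pos hx).trans (by linarith)) 2
    have e1 := pow_mul_exp_neg_le_factorial hx.le 1
    have e2 := pow_mul_exp_neg_le_factorial hx.le 2
    have e3 := pow_mul_exp_neg_le_factorial hx.le 3
    have e4 := pow_mul_exp_neg_le_factorial hx.le 4
    norm_num [Nat.factorial] at e1 e2 e3 e4
    calc (1 + log x ^ 2) * ((x ^ 2 + x) * exp (-x))
        ≤ (1 + x ^ 2) * ((x ^ 2 + x) * exp (-x)) := by gcongr
      _ = x ^ 4 * exp (-x) + x ^ 3 * exp (-x) + x ^ 2 * exp (-x) + x * exp (-x) := by ring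
      _ ≤ 33 := by linarith
  · -- `x ln² x = y² e^{-y}` with `y = -ln x ≥ 0`
    have hxlog : x * log x ^ 2 ≤ 2 := by
      have h := pow_mul_exp_neg_le_factorial (neg_nonneg.mpr (log_nonpos hx.le h1.le)) 2
      rwa [neg_neg, exp_log hx, neg_sq, mul_comm] at h
    have hexp1 : exp (-x) ≤ 1 := exp_le_one_iff.mpr (by linarith)
    have hsq : (x ^ 2 + x) * exp (-x) ≤ 2 * x := by nlinarith [exp_pos (-x)]
    calc (1 + log x ^ 2) * ((x ^ 2 + x) * exp (-x))
        ≤ (1 + log x ^ 2) * (2 * x) := by gcongr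
      _ = 2 * x + 2 * (x * log x ^ 2) := by ring
      _ ≤ 33 := by linarith

end Real

lemma sub_sq_le_two_mul_one_add_sq_mul_one_add_sq (a b : ℝ) :
    (a - b) ^ 2 ≤ 2 * (1 + a ^ 2) * (1 + b ^ 2) := by
  nlinarith [sq_nonneg (a + b), sq_nonneg (a * b)]

lemma abs_sq_sub_self_le {x : ℝ} (hx : 0 ≤ x) : |x ^ 2 - x| ≤ x ^ 2 + x := by
  rw [abs_le]
  constructor <;> nlinarith

section ExpNegRpow

variable {l t : ℝ}

lemma hasDerivAt_exp_neg_rpow_mul (hl : 0 < l) (s : ℝ) :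
    HasDerivAt (fun s : ℝ => exp (-(l ^ s * t)))
      (exp (-(l ^ s * t)) * -(l ^ s * log l * t)) s :=
  (((hasStrictDerivAt_const_rpow hl s).hasDerivAt.mul_const t).neg).exp

lemma iteratedDeriv_two_exp_neg_rpow_mul (hl : 0 < l) (s : ℝ) :
    iteratedDeriv 2 (fun s : ℝ => exp (-(l ^ s * t))) s =
      log l ^ 2 * ((l ^ s * t) ^ 2 - l ^ s * t) * exp (-(l ^ s * t)) := by
  have hderiv : deriv (fun s : ℝ => exp (-(l ^ s * t))) =
      fun s => exp (-(l ^ s * t)) * -(l ^ s * log l * t) :=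
    funext fun u => (hasDerivAt_exp_neg_rpow_mul hl u).deriv
  have hderiv2 : HasDerivAt (fun s : ℝ => exp (-(l ^ s * t)) * -(l ^ s * log l * t))
      (exp (-(l ^ s * t)) * -(l ^ s * log l * t) * -(l ^ s * log l * t) +
        exp (-(l ^ s * t)) * -(l ^ s * log l * log l * t)) s :=
    (hasDerivAt_exp_neg_rpow_mul hl s).mul
      (((hasStrictDerivAt_const_rpow hl s).hasDerivAt.mul_const (log l)).mul_const t).neg
  rw [iteratedDeriv_succ, iteratedDeriv_one, hderiv, hderiv2.deriv]
  ring

lemma abs_iteratedDeriv_two_exp_neg_rpow_mul_le (hl : 0 < l) (ht : 0 < t) {s : ℝ} (hs : s ≠ 0) :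
    |iteratedDeriv 2 (fun s : ℝ => exp (-(l ^ s * t))) s| ≤
      66 * s⁻¹ ^ 2 * (1 + log t ^ 2) := by
  set x := l ^ s * t with hx_def
  have hx : 0 < x := mul_pos (rpow_pos_of_pos hl s) ht
  have hlog : log l = s⁻¹ * (log x - log t) := by
    rw [hx_def, log_mul (rpow_pos_of_pos hl s).ne' ht.ne', log_rpow hl]
    field_simp
    ring
  calc |iteratedDeriv 2 (fun s : ℝ => exp (-(l ^ s * t))) s|
      = s⁻¹ ^ 2 * ((log x - log t) ^ 2 * (|x ^ 2 - x| * exp (-x))) := by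
        rw [iteratedDeriv_two_exp_neg_rpow_mul hl, ← hx_def, hlog, abs_mul, abs_mul,
          abs_exp, abs_of_nonneg (sq_nonneg _)]
        ring
    _ ≤ s⁻¹ ^ 2 * (2 * (1 + log x ^ 2) * (1 + log t ^ 2) * ((x ^ 2 + x) * exp (-x))) := by
        gcongr
        · exact sub_sq_le_two_mul_one_add_sq_mul_one_add_sq _ _
        · exact abs_sq_sub_self_le hx.le
    _ = 2 * s⁻¹ ^ 2 * (1 + log t ^ 2) * ((1 + log x ^ 2) * ((x ^ 2 + x) * exp (-x))) := by
        ring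
    _ ≤ 2 * s⁻¹ ^ 2 * (1 + log t ^ 2) * 33 := by
        gcongr
        exact one_add_log_sq_mul_sq_add_self_mul_exp_neg_le hx
    _ = 66 * s⁻¹ ^ 2 * (1 + log t ^ 2) := by ring

end ExpNegRpow

theorem second_deriv_E_bound_general (T : ℝ) :
    ∃ C > 0, ∀ l : ℝ, 0 < l → ∀ t ∈ Set.Ioc (0 : ℝ) T, ∀ s : ℝ, 0 < s →
      |iteratedDeriv 2 (fun s : ℝ => Real.exp (-(l ^ s * t))) s|
        ≤ C * s⁻¹ ^ 2 * (1 + |Real.log t| ^ 2) := by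
  refine ⟨66, by norm_num, fun l hl t ht s hs => ?_⟩
  rw [sq_abs]
  exact abs_iteratedDeriv_two_exp_neg_rpow_mul_le hl ht.1 hs.ne'

theorem second_deriv_E_bound (T : ℝ) (hT : 0 < T) :
    ∃ C > 0, ∀ l : ℝ, 0 < l → ∀ t ∈ Set.Ioc (0 : ℝ) T, ∀ s : ℝ, 0 < s →
      |iteratedDeriv 2 (fun s : ℝ => Real.exp (-(l ^ s * t))) s|
        ≤ C * s⁻¹ ^ 2 * (1 + |Real.log t| ^ 2) :=
  second_deriv_E_bound_general T
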